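/- Let d ≥ 3 be an integer and let a₀, a₁, …, a_d be nonnegative real numbers with a_d > 0; set P(x) = a_d·x^d + a_{d-1}·x^{d-1} + ⋯ + a₁·x + a₀. Then the maximal solution of the ODE ẍ(t) = P'(x(t)) with initial conditions x(0) = 1 and ẋ(0) = √(2·a_d) blows up in finite time: its maximal interval of existence does not contain [0,∞). -/

import Mathlib

open Set Polynomial

noncomputable section

/-- `x` (with velocity `v`) solves the second-order scalar ODE
`ẍ(t) = F (t, x(t))` on the set `s`. -/
def SolOn (F : ℝ → ℝ → ℝ) (x v : ℝ → ℝ) (s : Set ℝ) : Prop :=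
  ∀ t ∈ s, HasDerivAt x (v t) t ∧ HasDerivAt v (F t (x t)) t

/-- `x` (with velocity `v`) is a maximal solution of `ẍ(t) = F (t, x(t))` on
the open interval `s`. -/
def IsMaximalSolution (F : ℝ → ℝ → ℝ) (x v : ℝ → ℝ) (s : Set ℝ) : Prop :=
  IsOpen s ∧ s.OrdConnected ∧ s.Nonempty ∧ SolOn F x v s ∧
  ∀ (s' : Set ℝ) (x' v' : ℝ → ℝ), IsOpen s' → s'.OrdConnected → s ⊆ s' →
    SolOn F x' v' s' → (∀ t ∈ s, x' t = x t ∧ v' t = v t) → s' = s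

/-!
By continuous induction, `x ≥ 1` and `ẋ ≥ c := √(2 a_d)` for all `t ≥ 0`: as long as `x` and `ẋ`
stay positive, `x` increases and `ẍ = P'(x) ≥ 0`. On `[0, ∞)` we have `P' ≥ (a_d x^d)'`, so the
energy `ẋ²/2 - a_d x^d`, which vanishes at `t = 0`, is nondecreasing. Hence
`ẋ ≥ c x^{d/2} ≥ c x^{3/2}`, so `1/√x` decreases at rate at least `c/2` while staying positive,
which is impossible beyond `t = 2/c`.
-/

open Filter Topology

section PolynomialBounds

variable {R : Type*} [CommSemiring R] (d : ℕ) (a : ℕ → R) (p : R)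

lemma eval_derivative_sum_C_mul_X_pow :
    eval p (derivative (∑ i ∈ Finset.range (d + 1), C (a i) * X ^ i)) =
      ∑ i ∈ Finset.range (d + 1), a i * (i * p ^ (i - 1)) := by
  simp only [map_sum, eval_finsetSum, derivative_C_mul, derivative_X_pow, eval_mul, eval_C,
    eval_pow, eval_X]

variable [PartialOrder R] [IsOrderedRing R] {d a p}

lemma eval_derivative_sum_C_mul_X_pow_nonneg (ha : ∀ i ≤ d, 0 ≤ a i) (hp : 0 ≤ p) :
    0 ≤ eval p (derivative (∑ i ∈ Finset.range (d + 1), C (a i) * X ^ i)) := by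
  rw [eval_derivative_sum_C_mul_X_pow]
  exact Finset.sum_nonneg fun i hi =>
    mul_nonneg (ha i (Finset.mem_range_succ_iff.mp hi)) (by positivity)

lemma le_eval_derivative_sum_C_mul_X_pow (ha : ∀ i ≤ d, 0 ≤ a i) (hp : 0 ≤ p) :
    a d * (d * p ^ (d - 1)) ≤
      eval p (derivative (∑ i ∈ Finset.range (d + 1), C (a i) * X ^ i)) := by
  rw [eval_derivative_sum_C_mul_X_pow]
  exact Finset.single_le_sum (f := fun i => a i * (i * p ^ (i - 1)))
    (fun i hi => mul_nonneg (ha i (Finset.mem_range_succ_iff.mp hi)) (by positivity))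
    (Finset.self_mem_range_succ d)

end PolynomialBounds

lemma monotoneOn_of_hasDerivAt_nonneg {D : Set ℝ} (hD : Convex ℝ D) {f f' : ℝ → ℝ}
    (hf : ∀ u ∈ D, HasDerivAt f (f' u) u) (hf' : ∀ u ∈ D, 0 ≤ f' u) : MonotoneOn f D :=
  monotoneOn_of_hasDerivWithinAt_nonneg hD
    (fun u hu => (hf u hu).continuousAt.continuousWithinAt)
    (fun u hu => (hf u (interior_subset hu)).hasDerivWithinAt)
    fun u hu => hf' u (interior_subset hu)

lemma eventually_nhdsGE_le_of_hasDerivAt_nonneg {f f' : ℝ → ℝ} {t : ℝ}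
    (h : ∀ᶠ u in 𝓝[≥] t, HasDerivAt f (f' u) u ∧ 0 ≤ f' u) : ∀ᶠ u in 𝓝[≥] t, f t ≤ f u := by
  obtain ⟨r, hr, hsub⟩ := mem_nhdsGE_iff_exists_Ico_subset.mp h
  have hmono : MonotoneOn f (Ico t r) :=
    monotoneOn_of_hasDerivAt_nonneg (convex_Ico t r) (fun u hu => (hsub hu).1)
      fun u hu => (hsub hu).2
  filter_upwards [Ico_mem_nhdsGE hr] with u hu
  exact hmono (left_mem_Ico.mpr hr) hu hu.1

namespace SolOn

variable {F : ℝ → ℝ → ℝ} {x v : ℝ → ℝ}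

theorem initial_le_of_forcing_nonneg (hsol : SolOn F x v (Ici 0))
    (hF : ∀ t p, 0 < p → 0 ≤ F t p) (hx0 : 0 < x 0) (hv0 : 0 < v 0) {t : ℝ} (ht : 0 ≤ t) :
    x 0 ≤ x t ∧ v 0 ≤ v t := by
  set S := {u | x 0 ≤ x u ∧ v 0 ≤ v u}
  have hclosed : ∀ b, IsClosed (S ∩ Icc 0 b) := fun b => by
    have hxc : ContinuousOn x (Icc 0 b) := fun u hu =>
      (hsol u hu.1).1.continuousAt.continuousWithinAt
    have hvc : ContinuousOn v (Icc 0 b) := fun u hu =>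
      (hsol u hu.1).2.continuousAt.continuousWithinAt
    convert (isClosed_Icc.isClosed_le continuousOn_const hxc).inter
      (isClosed_Icc.isClosed_le continuousOn_const hvc) using 1
    ext u
    simp only [S, mem_inter_iff, mem_ofPred_eq]
    tauto
  have hstep : ∀ u ∈ S, 0 ≤ u → S ∈ 𝓝[>] u := by
    rintro u ⟨hxu, hvu⟩ hu
    have hnear : ∀ᶠ w in 𝓝[≥] u,
        (HasDerivAt x (v w) w ∧ HasDerivAt v (F w (x w)) w) ∧ 0 < x w ∧ 0 < v w := by
      refine ((eventually_mem_nhdsWithin).mono fun w hw => hsol w (hu.trans hw)).and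
        (nhdsWithin_le_nhds ?_)
      exact ((hsol u hu).1.continuousAt.eventually_const_lt (hx0.trans_le hxu)).and
        ((hsol u hu).2.continuousAt.eventually_const_lt (hv0.trans_le hvu))
    have hx_le := eventually_nhdsGE_le_of_hasDerivAt_nonneg
      (hnear.mono fun w hw => ⟨hw.1.1, hw.2.2.le⟩)
    have hv_le := eventually_nhdsGE_le_of_hasDerivAt_nonneg
      (hnear.mono fun w hw => ⟨hw.1.2, hF w (x w) hw.2.1⟩)
    exact nhdsWithin_mono _ Ioi_subset_Ici_self
      ((hx_le.and hv_le).mono fun w hw => ⟨hxu.trans hw.1, hvu.trans hw.2⟩)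
  exact (hclosed t).Icc_subset_of_forall_mem_nhdsWithin ⟨le_rfl, le_rfl⟩
    (fun u hu => hstep u hu.1 hu.2.1) ⟨ht, le_rfl⟩

theorem initial_energy_le (hsol : SolOn F x v (Ici 0)) {Q q : ℝ → ℝ}
    (hQ : ∀ p, HasDerivAt Q (q p) p) (hv : ∀ t, 0 ≤ t → 0 ≤ v t)
    (hq : ∀ t, 0 ≤ t → q (x t) ≤ F t (x t)) {t : ℝ} (ht : 0 ≤ t) :
    v 0 ^ 2 / 2 - Q (x 0) ≤ v t ^ 2 / 2 - Q (x t) := by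
  have hE : ∀ u ∈ Ici (0 : ℝ), HasDerivAt (fun u => v u ^ 2 / 2 - Q (x u))
      (v u * (F u (x u) - q (x u))) u := fun u hu => by
    refine ((((hsol u hu).2.pow 2).div_const 2).sub
      ((hQ (x u)).comp u (hsol u hu).1)).congr_deriv ?_
    push_cast
    ring
  exact monotoneOn_of_hasDerivAt_nonneg (convex_Ici 0) hE
    (fun u hu => mul_nonneg (hv u hu) (sub_nonneg.mpr (hq u hu))) self_mem_Ici ht ht

end SolOn

/-- `2 / (k √(x 0))` is the blow-up time of the solution `x 0 (1 - k √(x 0) t / 2)⁻²` of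
`ẋ = k x^{3/2}`. -/
theorem le_two_div_of_hasDerivAt_ge_mul_sqrt_pow_three {x v : ℝ → ℝ} {k T : ℝ} (hk : 0 < k)
    (hx : ∀ t ∈ Ico 0 T, HasDerivAt x (v t) t) (hpos : ∀ t ∈ Ico 0 T, 0 < x t)
    (hv : ∀ t ∈ Ico 0 T, k * √(x t) ^ 3 ≤ v t) : T ≤ 2 / (k * √(x 0)) := by
  by_contra! hT
  set t₁ := 2 / (k * √(x 0))
  have hIcc : Icc 0 t₁ ⊆ Ico 0 T := Icc_subset_Ico_right hT
  have h0 : (0 : ℝ) ∈ Icc 0 t₁ := left_mem_Icc.mpr (by positivity)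
  have ht₁ : t₁ ∈ Icc 0 t₁ := right_mem_Icc.mpr (by positivity)
  have hsqrt_pos : ∀ t ∈ Icc 0 t₁, 0 < √(x t) := fun t ht =>
    Real.sqrt_pos.mpr (hpos t (hIcc ht))
  have hmono : MonotoneOn (fun t => -(k / 2) * t - (√(x t))⁻¹) (Icc 0 t₁) := by
    refine monotoneOn_of_hasDerivAt_nonneg (convex_Icc 0 t₁)
      (f' := fun t => v t / (2 * √(x t) ^ 3) - k / 2) (fun t ht => ?_) fun t ht => ?_
    · refine (((hasDerivAt_id t).const_mul (-(k / 2))).sub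
        (((hx t (hIcc ht)).sqrt (hpos t (hIcc ht)).ne').inv (hsqrt_pos t ht).ne')).congr_deriv ?_
      field_simp
      ring
    · have := hsqrt_pos t ht
      rw [sub_nonneg, le_div_iff₀ (by positivity)]
      linarith [hv t (hIcc ht)]
  have hend := hmono h0 ht₁ ht₁.1
  have hk_t₁ : k / 2 * t₁ = (√(x 0))⁻¹ := by simp only [t₁]; field_simp
  have := inv_pos.mpr (hsqrt_pos t₁ ht₁)
  simp only [mul_zero, zero_sub] at hend
  linarith

/-- **Finite-time blow-up for `ẍ = P'(x)` with nonnegative coefficients.**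
Let `d ≥ 3`, let `a₀,…,a_d ≥ 0` with `a_d > 0`, and
`P(x) = a_d x^d + ⋯ + a₁ x + a₀`.  Then the maximal solution of
`ẍ = P'(x)` with `x(0) = 1`, `ẋ(0) = √(2 a_d)` blows up in finite time: its
maximal interval of existence does not contain `[0,∞)`. -/
theorem blowup_positive_coeffs (d : ℕ) (hd : 3 ≤ d) (a : ℕ → ℝ)
    (ha : ∀ i ≤ d, 0 ≤ a i) (had : 0 < a d) :
    ∀ (x v : ℝ → ℝ) (s : Set ℝ),
      IsMaximalSolution
        (fun _ p => Polynomial.eval p (Polynomial.derivative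
          (∑ i ∈ Finset.range (d + 1), Polynomial.C (a i) * Polynomial.X ^ i)))
        x v s →
      (0 : ℝ) ∈ s → x 0 = 1 → v 0 = Real.sqrt (2 * a d) →
      ¬ Ici (0 : ℝ) ⊆ s := by
  intro x v s hmax _ hx0 hv0 hsub
  set P := ∑ i ∈ Finset.range (d + 1), C (a i) * X ^ i
  set c := √(2 * a d)
  have hc : 0 < c := Real.sqrt_pos.mpr (by positivity)
  have hsol : SolOn (fun _ p => (derivative P).eval p) x v (Ici 0) := fun t ht =>
    hmax.2.2.2.1 t (hsub ht)
  have hgrowth : ∀ t, 0 ≤ t → 1 ≤ x t ∧ c ≤ v t := fun t ht => by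
    simpa only [hx0, hv0] using hsol.initial_le_of_forcing_nonneg
      (fun _ p hp => eval_derivative_sum_C_mul_X_pow_nonneg ha hp.le)
      (hx0 ▸ one_pos) (hv0 ▸ hc) ht
  have henergy : ∀ t, 0 ≤ t → 2 * a d * x t ^ d ≤ v t ^ 2 := fun t ht => by
    have := hsol.initial_energy_le (fun p => (hasDerivAt_pow d p).const_mul (a d))
      (fun u hu => hc.le.trans (hgrowth u hu).2)
      (fun u hu => le_eval_derivative_sum_C_mul_X_pow ha (by linarith [hgrowth u hu])) ht
    rw [hx0, hv0, Real.sq_sqrt (by positivity), one_pow] at this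
    linarith
  have hv_ge : ∀ t ∈ Ico 0 (2 / c + 1), c * √(x t) ^ 3 ≤ v t := by
    rintro t ⟨ht, -⟩
    obtain ⟨hx1, hv1⟩ := hgrowth t ht
    refine (pow_le_pow_iff_left₀ (by positivity) (hc.le.trans hv1) two_ne_zero).mp ?_
    calc (c * √(x t) ^ 3) ^ 2 = 2 * a d * x t ^ 3 := by
          rw [mul_pow, ← pow_mul, Real.sq_sqrt (by positivity),
            mul_comm 3 2, pow_mul, Real.sq_sqrt (by positivity)]
      _ ≤ 2 * a d * x t ^ d := by gcongr
      _ ≤ v t ^ 2 := henergy t ht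
  have := le_two_div_of_hasDerivAt_ge_mul_sqrt_pow_three hc (fun t ht => (hsol t ht.1).1)
    (fun t ht => by linarith [(hgrowth t ht.1).1]) hv_ge
  rw [hx0, Real.sqrt_one, mul_one] at this
  linarith

end
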